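/- For pairwise distinct nonzero elements A, B, C of a skew field K, the three-point ratio of inverses satisfies r(A⁻¹, B⁻¹; C⁻¹) = B · r(A,B;C) · A⁻¹, i.e., (B⁻¹-C⁻¹)⁻¹(A⁻¹-C⁻¹) = B(B-C)⁻¹(A-C)A⁻¹. -/

import Mathlib

/-! In a skew field the difference of inverses factors as `x⁻¹ - y⁻¹ = y⁻¹ (y - x) x⁻¹`. Applying this
to `B⁻¹ - C⁻¹` and `A⁻¹ - C⁻¹` and inverting the first factorization, the inner factors `C` and `C⁻¹`
meet and cancel, leaving `B (C - B)⁻¹ (C - A) A⁻¹`; the two sign changes then cancel as well. -/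

theorem inv_sub_inv_eq_inv_mul_sub_mul_inv {K : Type*} [DivisionRing K] {a b : K}
    (ha : a ≠ 0) (hb : b ≠ 0) : a⁻¹ - b⁻¹ = b⁻¹ * (b - a) * a⁻¹ := by
  rw [mul_sub, inv_mul_cancel₀ hb, sub_mul, one_mul, mul_assoc, mul_inv_cancel₀ ha, mul_one]

theorem ratio_of_inverses_general {K : Type*} [DivisionRing K] (A B C : K)
    (hA : A ≠ 0) (hB : B ≠ 0) (hC : C ≠ 0) :
    (B⁻¹ - C⁻¹)⁻¹ * (A⁻¹ - C⁻¹) = B * ((B - C)⁻¹ * (A - C)) * A⁻¹ := by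
  calc (B⁻¹ - C⁻¹)⁻¹ * (A⁻¹ - C⁻¹)
      = (C⁻¹ * (C - B) * B⁻¹)⁻¹ * (C⁻¹ * (C - A) * A⁻¹) := by
        rw [inv_sub_inv_eq_inv_mul_sub_mul_inv hB hC, inv_sub_inv_eq_inv_mul_sub_mul_inv hA hC]
    _ = B * ((C - B)⁻¹ * (C * C⁻¹) * (C - A)) * A⁻¹ := by
        simp only [mul_inv_rev, inv_inv, mul_assoc]
    _ = B * ((B - C)⁻¹ * (A - C)) * A⁻¹ := by
        rw [mul_inv_cancel₀ hC, mul_one, ← neg_sub B C, ← neg_sub A C, inv_neg, neg_mul_neg]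

theorem ratio_of_inverses {K : Type*} [DivisionRing K] (A B C : K)
    (hA : A ≠ 0) (hB : B ≠ 0) (hC : C ≠ 0)
    (hAB : A ≠ B) (hAC : A ≠ C) (hBC : B ≠ C) :
    (B⁻¹ - C⁻¹)⁻¹ * (A⁻¹ - C⁻¹) = B * ((B - C)⁻¹ * (A - C)) * A⁻¹ :=
  ratio_of_inverses_general A B C hA hB hC
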